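/- Suppose condition (B_p) holds for some p > 2 and condition (Q_∞) holds. Let N(n) = max{k : τ_k ≤ n}. Then, as n → ∞, n^{−1/2} |X_n − X_{τ_{N(n)}}| → 0 in probability. -/

import Mathlib

open MeasureTheory Filter Topology Asymptotics
open scoped ENNReal NNReal

/-- A time-homogeneous Markov chain on a measurable state space `E`, encoded via the family
`P z` of laws (on trajectory space) of the chain started at `z`.  The field `markov` is the
time-homogeneous Markov property: conditionally on the event `{ω n = w}` intersected with any
event `B` depending only on the first `n+1` coordinates, the shifted trajectory has law `P w`. -/
structure MChain (E : Type*) [MeasurableSpace E] where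
  P : E → MeasureTheory.Measure (ℕ → E)
  isProb : ∀ z, MeasureTheory.IsProbabilityMeasure (P z)
  init : ∀ z, P z {ω | ω 0 = z} = 1
  markov : ∀ (z : E) (n : ℕ) (w : E) (A B : Set (ℕ → E)), MeasurableSet A →
    (∀ ω ω' : ℕ → E, (∀ k, k ≤ n → ω k = ω' k) → ω ∈ B → ω' ∈ B) →
    P z (B ∩ {ω | ω n = w} ∩ {ω | (fun k => ω (n + k)) ∈ A})
      = P z (B ∩ {ω | ω n = w}) * P w A

namespace MChain

variable {E : Type*} [MeasurableSpace E]

/-- Irreducibility: every state can be reached from every state with positive probability. -/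
def Irreducible (X : MChain E) : Prop := ∀ z w : E, ∃ n : ℕ, X.P z {ω | ω n = w} ≠ 0

/-- Recurrence: from every state, the chain returns to it almost surely. -/
def Recurrent (X : MChain E) : Prop := ∀ z : E, X.P z {ω | ∃ n, 1 ≤ n ∧ ω n = z} = 1

def Transient (X : MChain E) : Prop := ¬ X.Recurrent

/-- The first return time to `z` (with junk value `0`, via `sInf ∅ = 0`, if there is no return). -/
noncomputable def returnTime (z : E) (ω : ℕ → E) : ℕ := sInf {n | 1 ≤ n ∧ ω n = z}

/-- Positive recurrence: recurrent, with finite mean return times. -/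
def PositiveRecurrent (X : MChain E) : Prop :=
  X.Recurrent ∧ ∀ z : E, (∫⁻ ω, (returnTime z ω : ℝ≥0∞) ∂(X.P z)) ≠ ⊤

def NullRecurrent (X : MChain E) : Prop := X.Recurrent ∧ ¬ X.PositiveRecurrent

end MChain

section HalfStrip

variable {S : Type*} [Fintype S] [DecidableEq S] [Nonempty S]
  [MeasurableSpace S] [MeasurableSingletonClass S]

/-- `qhat X x i j` is the probability that the `S`-coordinate moves from `i` to `j` when the
`ℕ`-coordinate is at `x`; this is `q_x(i,j) = Σ_y p(x,i,y,j)` of the paper. -/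
noncomputable def qhat (X : MChain (ℕ × S)) (x : ℕ) (i j : S) : ℝ :=
  (X.P (x, i) {ω | (ω 1).2 = j}).toReal

/-- `stepMoment X k x i = μ_k(x,i) = E[(X_{n+1}-X_n)^k | X_n = x, η_n = i]`. -/
noncomputable def stepMoment (X : MChain (ℕ × S)) (k : ℕ) (x : ℕ) (i : S) : ℝ :=
  ∫ ω, (((ω 1).1 : ℝ) - (x : ℝ)) ^ k ∂(X.P (x, i))

/-- Condition (B_p): uniformly bounded conditional `p`-th moments of the jumps of the
`ℕ`-coordinate (by the Markov property, the conditional moment given `F_n` is a function of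
the current state only). -/
def CondB (X : MChain (ℕ × S)) (p : ℝ) : Prop :=
  ∃ C : ℝ≥0∞, C ≠ ⊤ ∧ ∀ (x : ℕ) (i : S),
    (∫⁻ ω, ENNReal.ofReal (|((ω 1).1 : ℝ) - (x : ℝ)| ^ p) ∂(X.P (x, i))) ≤ C

def IsStochasticMatrix (Q : S → S → ℝ) : Prop :=
  (∀ i j, 0 ≤ Q i j) ∧ ∀ i, (∑ j, Q i j) = 1

def IsIrreducibleMatrix (Q : S → S → ℝ) : Prop :=
  ∀ i j, ∃ n : ℕ, 0 < ((Matrix.of Q) ^ n) i j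

/-- Aperiodicity (for a finite irreducible stochastic matrix, eventual positivity of the
diagonal entries of the powers is equivalent to aperiodicity). -/
def IsAperiodicMatrix (Q : S → S → ℝ) : Prop :=
  ∀ i, ∃ N : ℕ, ∀ n, N ≤ n → 0 < ((Matrix.of Q) ^ n) i i

/-- `pst` is a (strictly positive) stationary distribution for `Q`. -/
def IsStationaryDist (Q : S → S → ℝ) (pst : S → ℝ) : Prop :=
  (∀ i, 0 < pst i) ∧ (∑ i, pst i) = 1 ∧ ∀ j, (∑ i, pst i * Q i j) = pst j

/-- Condition (Q_∞): the transition matrix of the `S`-coordinate converges as `x → ∞` to an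
irreducible stochastic matrix `Q`. -/
def CondQ (X : MChain (ℕ × S)) (Q : S → S → ℝ) : Prop :=
  (∀ i j, Tendsto (fun x : ℕ => qhat X x i j) atTop (nhds (Q i j))) ∧
    IsStochasticMatrix Q ∧ IsIrreducibleMatrix Q

/-- Condition (Q_∞^+): as (Q_∞), with a power-law rate of convergence. -/
def CondQplus (X : MChain (ℕ × S)) (Q : S → S → ℝ) : Prop :=
  (∃ δ₀ : ℝ, 0 < δ₀ ∧ ∀ i j,
      (fun x : ℕ => qhat X x i j - Q i j) =O[atTop] fun x : ℕ => (x : ℝ) ^ (-δ₀)) ∧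
    IsStochasticMatrix Q ∧ IsIrreducibleMatrix Q

/-- Condition (M_C): asymptotically constant drifts, `μ₁(x,i) = d_i + o(1)`. -/
def CondMC (X : MChain (ℕ × S)) (d : S → ℝ) : Prop :=
  ∀ i, Tendsto (fun x : ℕ => stepMoment X 1 x i) atTop (nhds (d i))

/-- Condition (M_L): Lamperti-type drifts, `μ₁(x,i) = c_i/x + o(1/x)`, `μ₂(x,i) = s_i² + o(1)`,
with at least one `s_i²` nonzero. -/
def CondML (X : MChain (ℕ × S)) (c s2 : S → ℝ) : Prop :=
  (∀ i, 0 ≤ s2 i) ∧ (∃ i, s2 i ≠ 0) ∧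
    (∀ i, Tendsto (fun x : ℕ => (x : ℝ) * stepMoment X 1 x i) atTop (nhds (c i))) ∧
    (∀ i, Tendsto (fun x : ℕ => stepMoment X 2 x i) atTop (nhds (s2 i)))

/-- Condition (M_L^+): Lamperti-type drifts with power-law error bounds. -/
def CondMLplus (X : MChain (ℕ × S)) (c s2 : S → ℝ) : Prop :=
  (∀ i, 0 ≤ s2 i) ∧ (∃ i, s2 i ≠ 0) ∧
    ∃ δ₁ : ℝ, 0 < δ₁ ∧ ∀ i,
      ((fun x : ℕ => stepMoment X 1 x i - c i / (x : ℝ)) =O[atTop]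
        fun x : ℕ => (x : ℝ) ^ (-1 - δ₁)) ∧
      ((fun x : ℕ => stepMoment X 2 x i - s2 i) =O[atTop] fun x : ℕ => (x : ℝ) ^ (-δ₁))

/-- Successive visit times `τ_0 < τ_1 < ⋯` of the `S`-coordinate to the distinguished state
`s0` (junk value, via `sInf ∅ = 0`, if there is no such visit). -/
noncomputable def tauSeq (s0 : S) (ω : ℕ → ℕ × S) : ℕ → ℕ
  | 0 => sInf {n | (ω n).2 = s0}
  | m + 1 => sInf {n | tauSeq s0 ω m < n ∧ (ω n).2 = s0}

/-- `τ`, the first positive time at which the `S`-coordinate visits `s0`. -/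
noncomputable def tauRet (s0 : S) (ω : ℕ → ℕ × S) : ℕ :=
  sInf {n | 1 ≤ n ∧ (ω n).2 = s0}

/-- `D_n`, the maximal displacement of the `ℕ`-coordinate during the `n`-th excursion. -/
noncomputable def Dexc (s0 : S) (n : ℕ) (ω : ℕ → ℕ × S) : ℕ :=
  Finset.sup (Finset.Icc (tauSeq s0 ω n) (tauSeq s0 ω (n + 1)))
    fun m => Nat.dist (ω m).1 (ω (tauSeq s0 ω n)).1

/-- `N(n) = max {k : τ_k ≤ n}`. -/
noncomputable def Ncount (s0 : S) (n : ℕ) (ω : ℕ → ℕ × S) : ℕ :=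
  sSup {k | tauSeq s0 ω k ≤ n}

end HalfStrip

/-- `Fdist a t` is the distribution function of the square root of a `Gamma(a,t)` random
variable: `F_{a,t}(x) = ∫_0^x 2 u^{2a-1} e^{-u²/t} / (t^a Γ(a)) du`. -/
noncomputable def Fdist (a t x : ℝ) : ℝ :=
  ∫ u in (0:ℝ)..x, 2 * u ^ (2 * a - 1) * Real.exp (-(u ^ 2) / t) / (t ^ a * Real.Gamma a)

/-!
Under (B_p) and (Q_∞) there are `L` and `δ > 0` such that from every state the line `η = s0` is
visited within `L` steps with probability at least `δ`. Far from the origin, the chain follows a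
positive path of the limit matrix `Q` while, by Chebyshev's inequality and (B_p), its jumps do not
carry `X` back below a threshold; near the origin there are finitely many states and irreducibility
applies. By the Markov property, `kL` consecutive steps without a visit have probability at most
`(1 - δ)^k`. Outside this event `n - τ_{N(n)} < kL`, and then `|X_n - X_{τ_{N(n)}}| ≥ ε √n` forces
one of the last `kL` jumps to be at least `ε √n / (kL)`, which has probability `O(n^{-p/2})`.
-/

theorem ENNReal.tendsto_div_ofReal_rpow_nhds_zero {α : Type*} {l : Filter α} {g : α → ℝ}
    (hg : Tendsto g l atTop) {C : ℝ≥0∞} (hC : C ≠ ⊤) {p : ℝ} (hp : 0 < p) :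
    Tendsto (fun a => C / ENNReal.ofReal (g a ^ p)) l (𝓝 0) := by
  have hinv : Tendsto (fun a => (ENNReal.ofReal (g a ^ p))⁻¹) l (𝓝 0) := by
    simpa using tendsto_inv_iff.2
      (ENNReal.tendsto_ofReal_atTop.comp ((tendsto_rpow_atTop hp).comp hg))
  simpa [div_eq_mul_inv] using ENNReal.Tendsto.const_mul hinv (Or.inr hC)

theorem exists_abs_sub_ge_of_le_abs_sub (f : ℕ → ℝ) {c a b m : ℕ} (hca : c ≤ a) (hab : a ≤ b)
    (hbm : b ≤ c + m) {s : ℝ} (hs : 0 < s) (hsf : s ≤ |f b - f a|) :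
    ∃ i < m, s / m ≤ |f (c + i + 1) - f (c + i)| := by
  have hm : 0 < m := by
    by_contra hm
    obtain rfl : b = a := by omega
    simp only [sub_self, abs_zero] at hsf
    linarith
  set g : ℕ → ℝ := fun i => f (c + i)
  have htelescope : f b - f a = ∑ i ∈ Finset.Ico (a - c) (b - c), (g (i + 1) - g i) := by
    rw [Finset.sum_Ico_eq_sub _ (by omega), Finset.sum_range_sub, Finset.sum_range_sub]
    simp only [g, Nat.add_sub_cancel' hca, Nat.add_sub_cancel' (hca.trans hab)]
    ring
  have hsum : ∑ _i ∈ Finset.range m, s / m ≤ ∑ i ∈ Finset.range m, |g (i + 1) - g i| :=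
    calc ∑ _i ∈ Finset.range m, s / m = s := by
          rw [Finset.sum_const, Finset.card_range, nsmul_eq_mul]
          field_simp
      _ ≤ |f b - f a| := hsf
      _ ≤ ∑ i ∈ Finset.Ico (a - c) (b - c), |g (i + 1) - g i| :=
          htelescope ▸ Finset.abs_sum_le_sum_abs _ _
      _ ≤ ∑ i ∈ Finset.range m, |g (i + 1) - g i| :=
          Finset.sum_le_sum_of_subset_of_nonneg
            (fun i hi => by simp only [Finset.mem_Ico, Finset.mem_range] at hi ⊢; omega)
            fun _ _ _ => abs_nonneg _
  obtain ⟨i, hi, hle⟩ := Finset.exists_le_of_sum_le (Finset.nonempty_range_iff.2 hm.ne') hsum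
  exact ⟨i, Finset.mem_range.1 hi, hle⟩

theorem exists_uniform_of_finite {ι α : Type*} [Finite ι] [Nonempty α] [Preorder α]
    [IsDirectedOrder α] {P : ι → ℝ≥0∞ → α → Prop}
    (hP : ∀ i δ δ' a a', δ' ≤ δ → a ≤ a' → P i δ a → P i δ' a')
    (h : ∀ i, ∃ δ ≠ 0, ∃ a, P i δ a) : ∃ δ ≠ 0, ∃ a, ∀ i, P i δ a := by
  have := Fintype.ofFinite ι
  choose δ hδ a ha using h
  obtain ⟨M, hM⟩ := Finite.exists_le a
  refine ⟨Finset.univ.inf δ, ?_, M, fun i =>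
    hP i _ _ _ _ (Finset.inf_le (Finset.mem_univ i)) (hM i) (ha i)⟩
  exact ((Finset.lt_inf_iff ENNReal.zero_lt_top).2 fun i _ => pos_iff_ne_zero.2 (hδ i)).ne'

theorem Nat.cast_dist_eq_abs_sub (a b : ℕ) : (Nat.dist a b : ℝ) = |(a : ℝ) - b| := by
  rcases le_total a b with h | h
  · rw [Nat.dist_eq_sub_of_le h, Nat.cast_sub h, abs_sub_comm, abs_of_nonneg (by simpa)]
  · rw [Nat.dist_eq_sub_of_le_right h, Nat.cast_sub h, abs_of_nonneg (by simpa)]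

section StochasticMatrix

variable {S : Type*} [Fintype S] [DecidableEq S] {Q : S → S → ℝ}

theorem reflTransGen_of_pow_apply_ne_zero (hQ : ∀ i j, 0 ≤ Q i j) {n : ℕ} {i j : S}
    (h : (Matrix.of Q ^ n) i j ≠ 0) : Relation.ReflTransGen (fun a b => 0 < Q a b) i j := by
  induction n generalizing j with
  | zero =>
    obtain rfl : i = j := by simpa [Matrix.one_apply] using h
    exact .refl
  | succ n ih =>
    rw [pow_succ, Matrix.mul_apply] at h
    obtain ⟨k, -, hk⟩ := Finset.exists_ne_zero_of_sum_ne_zero h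
    obtain ⟨hik, hkj⟩ := mul_ne_zero_iff.1 hk
    exact (ih hik).tail ((hQ k j).lt_of_ne' hkj)

theorem IsStochasticMatrix.transGen_of_irreducible (hQs : IsStochasticMatrix Q)
    (hQi : IsIrreducibleMatrix Q) (i j : S) : Relation.TransGen (fun a b => 0 < Q a b) i j := by
  obtain ⟨k, -, hk⟩ := Finset.exists_ne_zero_of_sum_ne_zero (s := Finset.univ) (f := Q i)
    (by rw [hQs.2 i]; exact one_ne_zero)
  obtain ⟨n, hn⟩ := hQi k j
  exact .head' ((hQs.1 i k).lt_of_ne' hk) (reflTransGen_of_pow_apply_ne_zero hQs.1 hn.ne')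

end StochasticMatrix

namespace MChain

variable {E : Type*}

def IsDeterminedUpTo (n : ℕ) (B : Set (ℕ → E)) : Prop :=
  ∀ ω ω' : ℕ → E, (∀ k ≤ n, ω k = ω' k) → ω ∈ B → ω' ∈ B

def shift (n : ℕ) (ω : ℕ → E) : ℕ → E := fun k => ω (n + k)

def hitsWithin (F : Set E) (L : ℕ) : Set (ℕ → E) := {ω | ∃ k, 0 < k ∧ k ≤ L ∧ ω k ∈ F}

def avoidsOn (F : Set E) (a b : ℕ) : Set (ℕ → E) := {ω | ∀ t, a < t → t ≤ b → ω t ∉ F}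

theorem hitsWithin_mono (F : Set E) {L L' : ℕ} (h : L ≤ L') :
    hitsWithin F L ⊆ hitsWithin F L' :=
  fun _ ⟨k, hk0, hkL, hk⟩ => ⟨k, hk0, hkL.trans h, hk⟩

variable [MeasurableSpace E]

instance isProbabilityMeasure_P (X : MChain E) (z : E) : IsProbabilityMeasure (X.P z) :=
  X.isProb z

theorem measurable_shift (n : ℕ) : Measurable (shift (E := E) n) :=
  measurable_pi_lambda _ fun k => measurable_pi_apply (n + k)

variable (X : MChain E) (z : E)

theorem tsum_measure_inter_eval_mul_le {n : ℕ} {B : Set (ℕ → E)} {f g : E → ℝ≥0∞}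
    (hfg : ∀ ω ∈ B, f (ω n) ≤ g (ω n)) :
    ∑' w, X.P z (B ∩ {ω | ω n = w}) * f w ≤ ∑' w, X.P z (B ∩ {ω | ω n = w}) * g w := by
  refine ENNReal.tsum_le_tsum fun w => ?_
  rcases (B ∩ {ω | ω n = w}).eq_empty_or_nonempty with h | ⟨ω, hωB, rfl⟩
  · simp [h]
  · gcongr
    exact hfg ω hωB

variable [MeasurableSingletonClass E]

theorem measurableSet_eval_eq (n : ℕ) (w : E) : MeasurableSet {ω : ℕ → E | ω n = w} :=
  (measurableSet_singleton w).preimage (measurable_pi_apply n)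

theorem exists_pos_time_measure_ne_zero (hX : X.Irreducible) {w : E} (hzw : z ≠ w) :
    ∃ n, 0 < n ∧ X.P z {ω | ω n = w} ≠ 0 := by
  obtain ⟨n, hn⟩ := hX z w
  refine ⟨n, Nat.pos_of_ne_zero ?_, hn⟩
  rintro rfl
  refine hn (measure_mono_null (t := {ω | ω 0 = z}ᶜ)
    (fun ω (hω : ω 0 = w) (hωz : ω 0 = z) => hzw (hωz ▸ hω)) ?_)
  exact (prob_compl_eq_zero_iff (measurableSet_eval_eq 0 z)).2 (X.init z)

variable [Countable E]

theorem measurableSet_hitsWithin (F : Set E) (L : ℕ) : MeasurableSet (hitsWithin F L) := by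
  have : hitsWithin F L = ⋃ k, ⋃ (_ : 0 < k ∧ k ≤ L), (fun ω : ℕ → E => ω k) ⁻¹' F := by
    ext ω; simp [hitsWithin, and_assoc]
  rw [this]
  exact .iUnion fun k => .iUnion fun _ => MeasurableSet.of_discrete.preimage (measurable_pi_apply k)

theorem measurableSet_avoidsOn (F : Set E) (a b : ℕ) : MeasurableSet (avoidsOn F a b) := by
  have : avoidsOn F a b = ⋂ t, ⋂ (_ : a < t ∧ t ≤ b), (fun ω : ℕ → E => ω t) ⁻¹' Fᶜ := by
    ext ω; simp [avoidsOn, and_imp]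
  rw [this]
  exact .iInter fun t => .iInter fun _ => MeasurableSet.of_discrete.preimage (measurable_pi_apply t)

section Decomposition

variable {n : ℕ} {B : Set (ℕ → E)} {A : E → Set (ℕ → E)}

theorem tsum_measure_inter_eval_eq (hB : MeasurableSet B) :
    ∑' w, X.P z (B ∩ {ω | ω n = w}) = X.P z B := by
  rw [← measure_iUnion (fun v w hvw => Set.disjoint_left.2 fun ω hv hw => hvw (hv.2 ▸ hw.2))
    fun w => hB.inter (measurableSet_eval_eq n w)]
  congr 1
  ext ω
  simp

theorem measure_inter_shift_mem (hB : MeasurableSet B) (hBn : IsDeterminedUpTo n B)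
    (hA : ∀ w, MeasurableSet (A w)) :
    X.P z (B ∩ {ω | shift n ω ∈ A (ω n)}) = ∑' w, X.P z (B ∩ {ω | ω n = w}) * X.P w (A w) := by
  have hunion : B ∩ {ω | shift n ω ∈ A (ω n)} =
      ⋃ w, B ∩ {ω | ω n = w} ∩ {ω | shift n ω ∈ A w} := by
    ext ω
    simp only [Set.mem_inter_iff, Set.mem_ofPred_eq, Set.mem_iUnion]
    exact ⟨fun h => ⟨ω n, ⟨h.1, rfl⟩, h.2⟩, fun ⟨w, ⟨hB, hw⟩, hA⟩ => ⟨hB, hw ▸ hA⟩⟩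
  rw [hunion, measure_iUnion]
  · exact tsum_congr fun w => X.markov z n w (A w) B (hA w) hBn
  · exact fun v w hvw => Set.disjoint_left.2 fun ω hv hw => hvw (hv.1.2 ▸ hw.1.2)
  · exact fun w => (hB.inter (measurableSet_eval_eq n w)).inter (measurable_shift n (hA w))

theorem measure_inter_shift_mem_le (hB : MeasurableSet B) (hBn : IsDeterminedUpTo n B)
    (hA : ∀ w, MeasurableSet (A w)) {c : ℝ≥0∞} (hc : ∀ ω ∈ B, X.P (ω n) (A (ω n)) ≤ c) :
    X.P z (B ∩ {ω | shift n ω ∈ A (ω n)}) ≤ X.P z B * c := by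
  rw [measure_inter_shift_mem X z hB hBn hA, ← tsum_measure_inter_eval_eq X z (n := n) hB,
    ← ENNReal.tsum_mul_right]
  exact tsum_measure_inter_eval_mul_le X z (g := fun _ => c) hc

theorem measure_mul_le_measure_inter_shift_mem (hB : MeasurableSet B)
    (hBn : IsDeterminedUpTo n B) (hA : ∀ w, MeasurableSet (A w)) {c : ℝ≥0∞}
    (hc : ∀ ω ∈ B, c ≤ X.P (ω n) (A (ω n))) :
    X.P z B * c ≤ X.P z (B ∩ {ω | shift n ω ∈ A (ω n)}) := by
  rw [measure_inter_shift_mem X z hB hBn hA, ← tsum_measure_inter_eval_eq X z (n := n) hB,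
    ← ENNReal.tsum_mul_right]
  exact tsum_measure_inter_eval_mul_le X z (f := fun _ => c) hc

end Decomposition

variable {F : Set E} {L : ℕ} {δ : ℝ≥0∞}

theorem measure_avoidsOn_le (hδ : ∀ w, δ ≤ X.P w (hitsWithin F L)) (a k : ℕ) :
    X.P z (avoidsOn F a (a + k * L)) ≤ (1 - δ) ^ k := by
  induction k with
  | zero =>
      simpa using prob_le_one
  | succ k ih =>
    have hsub : avoidsOn F a (a + (k + 1) * L) ⊆ avoidsOn F a (a + k * L) ∩
        {ω | shift (a + k * L) ω ∈ (hitsWithin F L)ᶜ} := by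
      refine fun ω hω => ⟨fun t hat htb => hω t hat (by nlinarith), ?_⟩
      rintro ⟨j, hj0, hjL, hj⟩
      exact hω (a + k * L + j) (by omega) (by nlinarith) hj
    have hpast : IsDeterminedUpTo (a + k * L) (avoidsOn F a (a + k * L)) :=
      fun ω ω' hωω' hω t hat htb => hωω' t htb ▸ hω t hat htb
    have hstep : ∀ w, X.P w (hitsWithin F L)ᶜ ≤ 1 - δ := fun w => by
      rw [prob_compl_eq_one_sub (measurableSet_hitsWithin F L)]
      exact tsub_le_tsub_left (hδ w) 1
    calc X.P z (avoidsOn F a (a + (k + 1) * L))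
        ≤ X.P z (avoidsOn F a (a + k * L)) * (1 - δ) :=
          (measure_mono hsub).trans (measure_inter_shift_mem_le X z (measurableSet_avoidsOn F _ _)
            hpast (fun _ => (measurableSet_hitsWithin F L).compl) fun ω _ => hstep (ω _))
      _ ≤ (1 - δ) ^ (k + 1) := by
          rw [pow_succ]
          gcongr

theorem ae_frequently_mem (hδ0 : δ ≠ 0) (hδ : ∀ w, δ ≤ X.P w (hitsWithin F L)) :
    ∀ᵐ ω ∂X.P z, ∃ᶠ t in atTop, ω t ∈ F := by
  have hlim : Tendsto (fun k => (1 - δ) ^ k) atTop (𝓝 0) :=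
    ENNReal.tendsto_pow_atTop_nhds_zero_of_lt_one
      (ENNReal.sub_lt_self ENNReal.one_ne_top one_ne_zero hδ0)
  have hnull : ∀ a, X.P z (⋂ k, avoidsOn F a (a + k * L)) = 0 := fun a =>
    le_antisymm (ge_of_tendsto' hlim fun k =>
      (measure_mono (Set.iInter_subset _ k)).trans (measure_avoidsOn_le X z hδ a k)) zero_le
  refine measure_mono_null (fun ω hω => ?_) (measure_iUnion_null hnull)
  have hω : ¬ ∃ᶠ t in atTop, ω t ∈ F := hω
  obtain ⟨a, ha⟩ := eventually_atTop.1 (not_frequently.1 hω)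
  exact Set.mem_iUnion.2 ⟨a, Set.mem_iInter.2 fun k t hat _ => ha t hat.le⟩

end MChain

section VisitTimes

variable {S : Type*} {s0 : S} {ω : ℕ → ℕ × S}

theorem tauSeq_lt_tauSeq_succ (hω : ∃ᶠ t in atTop, (ω t).2 = s0) (k : ℕ) :
    tauSeq s0 ω k < tauSeq s0 ω (k + 1) := by
  obtain ⟨u, hu, hus⟩ := frequently_atTop.1 hω (tauSeq s0 ω k + 1)
  exact (Nat.sInf_mem (s := {n | tauSeq s0 ω k < n ∧ (ω n).2 = s0}) ⟨u, hu, hus⟩).1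

theorem le_tauSeq_Ncount (hω : ∃ᶠ t in atTop, (ω t).2 = s0) {t n : ℕ} (ht : (ω t).2 = s0)
    (htn : t ≤ n) : t ≤ tauSeq s0 ω (Ncount s0 n ω) ∧ tauSeq s0 ω (Ncount s0 n ω) ≤ n := by
  have hmono : StrictMono (tauSeq s0 ω) := strictMono_nat_of_lt_succ (tauSeq_lt_tauSeq_succ hω)
  have hbdd : BddAbove {k | tauSeq s0 ω k ≤ n} := ⟨n, fun k hk => hmono.le_apply.trans hk⟩
  have hmem : tauSeq s0 ω (Ncount s0 n ω) ≤ n :=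
    Nat.sSup_mem (s := {k | tauSeq s0 ω k ≤ n})
      ⟨0, (Nat.sInf_le (s := {u | (ω u).2 = s0}) ht).trans htn⟩ hbdd
  have hnext : n < tauSeq s0 ω (Ncount s0 n ω + 1) :=
    not_le.1 (notMem_of_csSup_lt (s := {k | tauSeq s0 ω k ≤ n}) (Nat.lt_succ_self _) hbdd)
  refine ⟨not_lt.1 fun hlt => ?_, hmem⟩
  exact (Nat.sInf_le (s := {u | tauSeq s0 ω (Ncount s0 n ω) < u ∧ (ω u).2 = s0})
    ⟨hlt, ht⟩).trans htn |>.not_gt hnext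

theorem exists_jump_of_le_dist_tauSeq_Ncount (hω : ∃ᶠ t in atTop, (ω t).2 = s0) {m n : ℕ}
    (hmn : m ≤ n)    (hvisit : ω ∉ MChain.avoidsOn {v | v.2 = s0} (n - m) n) {s : ℝ} (hs : 0 < s)
    (hsd : s ≤ Nat.dist (ω n).1 (ω (tauSeq s0 ω (Ncount s0 n ω))).1) :
    ∃ i < m, s / m ≤ |((ω (n - m + i + 1)).1 : ℝ) - (ω (n - m + i)).1| := by
  obtain ⟨t, hmt, htn, ht⟩ : ∃ t, n - m < t ∧ t ≤ n ∧ (ω t).2 = s0 := by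
    simpa [MChain.avoidsOn] using hvisit
  obtain ⟨htτ, hτn⟩ := le_tauSeq_Ncount hω ht htn
  exact exists_abs_sub_ge_of_le_abs_sub (fun k => ((ω k).1 : ℝ)) (by omega) hτn (by omega) hs
    (by rwa [← Nat.cast_dist_eq_abs_sub])

end VisitTimes

namespace MChain

section JumpBounds

variable {S : Type*} [MeasurableSpace S] (X : MChain (ℕ × S)) {p : ℝ} (hp : 0 < p) {C : ℝ≥0∞}
  (hC : ∀ (x : ℕ) (i : S),
    ∫⁻ ω, ENNReal.ofReal (|((ω 1).1 : ℝ) - (x : ℝ)| ^ p) ∂(X.P (x, i)) ≤ C)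
include hp hC

theorem measure_jump_ge_le (w : ℕ × S) {t : ℝ} (ht : 0 < t) :
    X.P w {ω | t ≤ |((ω 1).1 : ℝ) - w.1|} ≤ C / ENNReal.ofReal (t ^ p) := by
  have hmeas : Measurable fun ω : ℕ → ℕ × S => ENNReal.ofReal (|((ω 1).1 : ℝ) - w.1| ^ p) :=
    (Measurable.of_discrete (f := fun y : ℕ => ENNReal.ofReal (|(y : ℝ) - w.1| ^ p))).comp
      (measurable_fst.comp (measurable_pi_apply 1))
  calc X.P w {ω | t ≤ |((ω 1).1 : ℝ) - w.1|}
      ≤ X.P w {ω | ENNReal.ofReal (t ^ p) ≤ ENNReal.ofReal (|((ω 1).1 : ℝ) - w.1| ^ p)} :=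
        measure_mono fun ω hω =>
          ENNReal.ofReal_le_ofReal (Real.rpow_le_rpow ht.le hω hp.le)
    _ ≤ (∫⁻ ω, ENNReal.ofReal (|((ω 1).1 : ℝ) - w.1| ^ p) ∂(X.P w)) / ENNReal.ofReal (t ^ p) :=
        meas_ge_le_lintegral_div hmeas.aemeasurable
          (by simpa using Real.rpow_pos_of_pos ht p) ENNReal.ofReal_ne_top
    _ ≤ C / ENNReal.ofReal (t ^ p) := ENNReal.div_le_div_right (hC w.1 w.2) _

theorem eventually_lt_measure_step (hC_top : C ≠ ⊤) {Q : S → S → ℝ}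
    (hQ : ∀ i j, Tendsto (fun x => qhat X x i j) atTop (𝓝 (Q i j))) {i j : S} {c : ℝ≥0∞}
    (hc : c < ENNReal.ofReal (Q i j)) (Y : ℕ) :
    ∀ᶠ x in atTop, c < X.P (x, i) {ω | (ω 1).2 = j ∧ Y ≤ (ω 1).1} := by
  have hstep : Tendsto (fun x => X.P (x, i) {ω | (ω 1).2 = j}) atTop
      (𝓝 (ENNReal.ofReal (Q i j))) := by
    refine ((ENNReal.continuous_ofReal.tendsto _).comp (hQ i j)).congr fun x => ?_
    exact ENNReal.ofReal_toReal (measure_ne_top _ _)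
  have hdrop : Tendsto (fun x => X.P (x, i) {ω | (ω 1).1 < Y}) atTop (𝓝 0) := by
    refine tendsto_of_tendsto_of_tendsto_of_le_of_le' tendsto_const_nhds
      (ENNReal.tendsto_div_ofReal_rpow_nhds_zero (g := fun x : ℕ => (x : ℝ) - Y)
        (tendsto_atTop_add_const_right _ _ tendsto_natCast_atTop_atTop) hC_top hp)
      (.of_forall fun _ => zero_le) ?_
    filter_upwards [eventually_gt_atTop Y] with x hx
    have hsub : {ω : ℕ → ℕ × S | (ω 1).1 < Y} ⊆ {ω | (x : ℝ) - Y ≤ |((ω 1).1 : ℝ) - x|} := by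
      intro ω hω
      have : ((ω 1).1 : ℝ) < Y := by exact_mod_cast hω
      show (x : ℝ) - Y ≤ |((ω 1).1 : ℝ) - x|
      rw [abs_sub_comm]
      exact (by linarith : (x : ℝ) - Y ≤ x - (ω 1).1).trans (le_abs_self _)
    exact (measure_mono hsub).trans (measure_jump_ge_le X hp hC (x, i) (by simpa using hx))
  have hlim := ENNReal.Tendsto.sub hstep hdrop (Or.inl ENNReal.ofReal_ne_top)
  rw [tsub_zero] at hlim
  filter_upwards [hlim.eventually_const_lt hc] with x hx
  refine hx.trans_le (le_measure_sdiff.trans (measure_mono fun ω ⟨hj, hY⟩ => ⟨hj, ?_⟩))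
  exact not_lt.1 hY

variable [MeasurableSingletonClass S] [Countable S]

theorem measure_jump_at_ge_le (z : ℕ × S) (k : ℕ) {t : ℝ} (ht : 0 < t) :
    X.P z {ω | t ≤ |((ω (k + 1)).1 : ℝ) - (ω k).1|} ≤ C / ENNReal.ofReal (t ^ p) := by
  have hA : ∀ w : ℕ × S, MeasurableSet {ω : ℕ → ℕ × S | t ≤ |((ω 1).1 : ℝ) - w.1|} := fun w =>
    (MeasurableSet.of_discrete (s := {v : ℕ × S | t ≤ |(v.1 : ℝ) - w.1|})).preimage
      (measurable_pi_apply 1)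
  simpa [shift] using measure_inter_shift_mem_le X z (n := k) MeasurableSet.univ
    (fun _ _ _ h => h) hA fun ω _ => measure_jump_ge_le X hp hC (ω k) ht

theorem measure_exists_jump_ge_le (z : ℕ × S) (c m : ℕ) {t : ℝ} (ht : 0 < t) :
    X.P z (⋃ i ∈ Finset.range m, {ω | t ≤ |((ω (c + i + 1)).1 : ℝ) - (ω (c + i)).1|})
      ≤ m * (C / ENNReal.ofReal (t ^ p)) := by
  refine (measure_biUnion_finset_le _ _).trans ?_
  simpa using Finset.sum_le_sum (s := Finset.range m) fun i _ =>
    measure_jump_at_ge_le X hp hC z (c + i) ht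

end JumpBounds

section Hitting

variable {S : Type*} [MeasurableSpace S] [MeasurableSingletonClass S] (X : MChain (ℕ × S))

theorem exists_measure_hitsWithin_ne_zero (hX : X.Irreducible) (s0 : S) (w : ℕ × S) :
    ∃ L, X.P w (hitsWithin {v | v.2 = s0} L) ≠ 0 := by
  obtain ⟨n, hn, hw⟩ := X.exists_pos_time_measure_ne_zero w hX (w := (w.1 + 1, s0))
    fun h => by simpa using congrArg Prod.fst h
  have hsub : {ω : ℕ → ℕ × S | ω n = (w.1 + 1, s0)} ⊆ hitsWithin {v | v.2 = s0} n :=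
    fun ω hω => ⟨n, hn, le_rfl, by simp_all⟩
  exact ⟨n, fun h0 => hw (measure_mono_null hsub h0)⟩

variable [Countable S] {p : ℝ} (hp : 0 < p) {C : ℝ≥0∞} (hC_top : C ≠ ⊤)
  (hC : ∀ (x : ℕ) (i : S),
    ∫⁻ ω, ENNReal.ofReal (|((ω 1).1 : ℝ) - (x : ℝ)| ^ p) ∂(X.P (x, i)) ≤ C)
  {Q : S → S → ℝ} (hQ : ∀ i j, Tendsto (fun x => qhat X x i j) atTop (𝓝 (Q i j))) {s0 : S}
include hp hC_top hC hQ

theorem exists_hitsWithin_far {i : S} (hi : Relation.TransGen (fun a b => 0 < Q a b) i s0) :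
    ∃ δ ≠ 0, ∃ L X₀, ∀ x ≥ X₀, δ ≤ X.P (x, i) (hitsWithin {w | w.2 = s0} L) := by
  induction hi using Relation.TransGen.head_induction_on with
  | @single i hi =>
    obtain ⟨X₀, hX₀⟩ := eventually_atTop.1 (eventually_lt_measure_step X hp hC hC_top hQ
      (ENNReal.half_lt_self (ENNReal.ofReal_pos.2 hi).ne' ENNReal.ofReal_ne_top) 0)
    refine ⟨_, (ENNReal.half_pos (ENNReal.ofReal_pos.2 hi).ne').ne', 1, X₀, fun x hx => ?_⟩
    exact (hX₀ x hx).le.trans (measure_mono fun ω hω => ⟨1, one_pos, le_rfl, hω.1⟩)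
  | @head i j hij _ ih =>
    obtain ⟨δ, hδ, L, X₀, hX₀⟩ := ih
    obtain ⟨X₁, hX₁⟩ := eventually_atTop.1 (eventually_lt_measure_step X hp hC hC_top hQ
      (ENNReal.half_lt_self (ENNReal.ofReal_pos.2 hij).ne' ENNReal.ofReal_ne_top) X₀)
    refine ⟨ENNReal.ofReal (Q i j) / 2 * δ,
      mul_ne_zero (ENNReal.half_pos (ENNReal.ofReal_pos.2 hij).ne').ne' hδ, L + 1, X₁,
      fun x hx => ?_⟩
    set B : Set (ℕ → ℕ × S) := {ω | (ω 1).2 = j ∧ X₀ ≤ (ω 1).1}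
    have hB : MeasurableSet B :=
      (MeasurableSet.of_discrete (s := {v : ℕ × S | v.2 = j ∧ X₀ ≤ v.1})).preimage
        (measurable_pi_apply 1)
    have hBpast : IsDeterminedUpTo 1 B := fun ω ω' h hω => by
      simpa only [B, Set.mem_ofPred_eq, h 1 le_rfl] using hω
    have hsub : B ∩ {ω | shift 1 ω ∈ hitsWithin {w | w.2 = s0} L} ⊆
        hitsWithin {w | w.2 = s0} (L + 1) := by
      rintro ω ⟨-, k, hk, hkL, hks⟩
      exact ⟨1 + k, by omega, by omega, hks⟩
    calc ENNReal.ofReal (Q i j) / 2 * δ ≤ X.P (x, i) B * δ := by gcongr; exact (hX₁ x hx).le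
      _ ≤ _ := measure_mul_le_measure_inter_shift_mem X (x, i) hB hBpast
          (fun _ => measurableSet_hitsWithin _ L) fun ω hω => by
            simpa [← hω.1] using hX₀ (ω 1).1 hω.2
      _ ≤ _ := measure_mono hsub

theorem exists_uniform_hitsWithin [Finite S] (hX : X.Irreducible)
    (hpath : ∀ i, Relation.TransGen (fun a b => 0 < Q a b) i s0) :
    ∃ δ ≠ 0, ∃ L, ∀ w, δ ≤ X.P w (hitsWithin {v | v.2 = s0} L) := by
  obtain ⟨δ₁, hδ₁, ⟨L₁, X₀⟩, hfar⟩ := exists_uniform_of_finite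
    (P := fun i δ (a : ℕ × ℕ) => ∀ x ≥ a.2, δ ≤ X.P (x, i) (hitsWithin {w | w.2 = s0} a.1))
    (fun i δ δ' a a' hδ ha h x hx => hδ.trans ((h x ((Prod.mk_le_mk.1 ha).2.trans hx)).trans
      (measure_mono (hitsWithin_mono _ (Prod.mk_le_mk.1 ha).1))))
    fun i => by
      obtain ⟨δ, hδ, L, X₀, h⟩ := exists_hitsWithin_far X hp hC_top hC hQ (hpath i)
      exact ⟨δ, hδ, (L, X₀), h⟩
  have : Finite {w : ℕ × S | w.1 < X₀} :=
    (((Set.finite_Iio X₀).prod Set.finite_univ).subset fun w hw => ⟨hw, trivial⟩).to_subtype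
  obtain ⟨δ₂, hδ₂, L₂, hnear⟩ := exists_uniform_of_finite
    (P := fun (w : {w : ℕ × S | w.1 < X₀}) δ L => δ ≤ X.P w (hitsWithin {v | v.2 = s0} L))
    (fun w δ δ' L L' hδ hL h => hδ.trans (h.trans (measure_mono (hitsWithin_mono _ hL))))
    fun w => by
      obtain ⟨L, hL⟩ := exists_measure_hitsWithin_ne_zero X hX s0 w
      exact ⟨_, hL, L, le_rfl⟩
  refine ⟨min δ₁ δ₂, (lt_min (pos_iff_ne_zero.2 hδ₁) (pos_iff_ne_zero.2 hδ₂)).ne', max L₁ L₂,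
    fun w => ?_⟩
  rcases lt_or_ge w.1 X₀ with h | h
  · exact (min_le_right _ _).trans ((hnear ⟨w, h⟩).trans
      (measure_mono (hitsWithin_mono _ (le_max_right _ _))))
  · exact (min_le_left _ _).trans ((hfar w.2 w.1 h).trans
      (measure_mono (hitsWithin_mono _ (le_max_left _ _))))

end Hitting

section Displacement

variable {S : Type*} [MeasurableSpace S] [MeasurableSingletonClass S] [Countable S]
  (X : MChain (ℕ × S)) {p : ℝ} (hp : 0 < p) {C : ℝ≥0∞}
  (hC : ∀ (x : ℕ) (i : S),
    ∫⁻ ω, ENNReal.ofReal (|((ω 1).1 : ℝ) - (x : ℝ)| ^ p) ∂(X.P (x, i)) ≤ C) {s0 : S}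
include hp hC

theorem measure_le_dist_tauSeq_Ncount_le (z : ℕ × S)
    (hio : ∀ᵐ ω ∂X.P z, ∃ᶠ t in atTop, (ω t).2 = s0) {m n : ℕ} (hm : 0 < m) (hmn : m ≤ n)
    {s : ℝ} (hs : 0 < s) :
    X.P z {ω | s ≤ Nat.dist (ω n).1 (ω (tauSeq s0 ω (Ncount s0 n ω))).1}
      ≤ X.P z (avoidsOn {v | v.2 = s0} (n - m) n) + m * (C / ENNReal.ofReal ((s / m) ^ p)) :=
  calc _ ≤ X.P z (avoidsOn {v | v.2 = s0} (n - m) n ∪ ⋃ i ∈ Finset.range m,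
        {ω | s / m ≤ |((ω (n - m + i + 1)).1 : ℝ) - (ω (n - m + i)).1|}) := by
        refine measure_mono_ae (hio.mono fun ω hω hsd => ?_)
        by_cases hvisit : ω ∈ avoidsOn {v | v.2 = s0} (n - m) n
        · exact Or.inl hvisit
        · obtain ⟨i, hi, hjump⟩ := exists_jump_of_le_dist_tauSeq_Ncount hω hmn hvisit hs hsd
          exact Or.inr (Set.mem_biUnion (Finset.mem_range.2 hi) hjump)
    _ ≤ _ := (measure_union_le _ _).trans (add_le_add le_rfl
        (measure_exists_jump_ge_le X hp hC z _ m (div_pos hs (Nat.cast_pos.2 hm))))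

theorem tendsto_measure_le_dist_tauSeq_Ncount (hC_top : C ≠ ⊤) {δ : ℝ≥0∞} (hδ : δ ≠ 0)
    {L : ℕ} (hhit : ∀ w, δ ≤ X.P w (hitsWithin {v | v.2 = s0} L)) (z : ℕ × S) {ε : ℝ}
    (hε : 0 < ε) :
    Tendsto (fun n : ℕ => X.P z {ω | ε * Real.sqrt n ≤
      (Nat.dist (ω n).1 (ω (tauSeq s0 ω (Ncount s0 n ω))).1 : ℝ)}) atTop (𝓝 0) := by
  have hL : 0 < L := Nat.pos_of_ne_zero fun hL => hδ <| le_zero_iff.1 <|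
    (hhit z).trans_eq (measure_mono_null (fun ω ⟨k, hk, hkL, _⟩ => by omega) measure_empty)
  rw [ENNReal.tendsto_nhds_zero]
  intro θ hθ
  obtain ⟨k, hk, hk1⟩ := (((ENNReal.tendsto_pow_atTop_nhds_zero_of_lt_one
    (ENNReal.sub_lt_self ENNReal.one_ne_top one_ne_zero hδ)).eventually_lt_const
    (ENNReal.half_pos hθ.ne')).and (eventually_ge_atTop 1)).exists
  have hm : 0 < k * L := Nat.mul_pos hk1 hL
  have hjump : Tendsto (fun n : ℕ => ((k * L : ℕ) : ℝ≥0∞) *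
      (C / ENNReal.ofReal ((ε * Real.sqrt n / (k * L : ℕ)) ^ p))) atTop (𝓝 0) := by
    have hsqrt : Tendsto (fun n : ℕ => ε * Real.sqrt n / (k * L : ℕ)) atTop atTop :=
      ((Real.tendsto_sqrt_atTop.comp tendsto_natCast_atTop_atTop).const_mul_atTop
        hε).atTop_div_const (Nat.cast_pos.2 hm)
    simpa using ENNReal.Tendsto.const_mul (ENNReal.tendsto_div_ofReal_rpow_nhds_zero hsqrt
      hC_top hp) (Or.inr (ENNReal.natCast_ne_top (k * L)))
  filter_upwards [hjump.eventually_le_const (ENNReal.half_pos hθ.ne'),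
    eventually_ge_atTop (k * L)] with n hn hmn
  calc _ ≤ X.P z (avoidsOn {v | v.2 = s0} (n - k * L) n) + _ :=
        measure_le_dist_tauSeq_Ncount_le X hp hC z (ae_frequently_mem X z hδ hhit) hm hmn
          (mul_pos hε (Real.sqrt_pos.2 (Nat.cast_pos.2 (hm.trans_le hmn))))
    _ ≤ θ / 2 + θ / 2 := by
        gcongr
        calc _ = X.P z (avoidsOn {v | v.2 = s0} (n - k * L) (n - k * L + k * L)) := by
              rw [Nat.sub_add_cancel hmn]
          _ ≤ θ / 2 := (measure_avoidsOn_le X z hhit _ k).trans hk.le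
    _ = θ := ENNReal.add_halves θ

end Displacement

end MChain

variable {S : Type*} [Fintype S] [DecidableEq S] [Nonempty S]
  [MeasurableSpace S] [MeasurableSingletonClass S]

theorem stmt18_general (X : MChain (ℕ × S)) (hirr : X.Irreducible) (s0 : S)
    (p : ℝ) (hp : 2 < p) (hB : CondB X p)
    (Q : S → S → ℝ) (hQ : CondQ X Q) :
    ∀ (z : ℕ × S) (ε : ℝ), 0 < ε →
      Tendsto (fun n : ℕ =>
          (X.P z {ω | ε * Real.sqrt n ≤
            (Nat.dist (ω n).1 (ω (tauSeq s0 ω (Ncount s0 n ω))).1 : ℝ)}).toReal)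
        atTop (nhds 0) := by
  obtain ⟨C, hC_top, hC⟩ := hB
  obtain ⟨hQlim, hQs, hQi⟩ := hQ
  have hp0 : 0 < p := by linarith
  obtain ⟨δ, hδ, L, hhit⟩ := MChain.exists_uniform_hitsWithin X hp0 hC_top hC hQlim hirr
    (hQs.transGen_of_irreducible hQi · s0)
  intro z ε hε
  simpa [Function.comp_def] using (ENNReal.tendsto_toReal ENNReal.zero_ne_top).comp
    (MChain.tendsto_measure_le_dist_tauSeq_Ncount X hp0 hC hC_top hδ hhit z hε)

/-- Lemma (discrepancy control): under (B_p) for some `p > 2` and (Q_∞),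
`n^{-1/2} |X_n − X_{τ_{N(n)}}| → 0` in probability. -/
theorem stmt18 (X : MChain (ℕ × S)) (hirr : X.Irreducible) (s0 : S)
    (p : ℝ) (hp : 2 < p) (hB : CondB X p)
    (Q : S → S → ℝ) (pst : S → ℝ) (hQ : CondQ X Q) (hpst : IsStationaryDist Q pst) :
    ∀ (z : ℕ × S) (ε : ℝ), 0 < ε →
      Tendsto (fun n : ℕ =>
          (X.P z {ω | ε * Real.sqrt n ≤
            (Nat.dist (ω n).1 (ω (tauSeq s0 ω (Ncount s0 n ω))).1 : ℝ)}).toReal)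
        atTop (nhds 0) :=
  stmt18_general X hirr s0 p hp hB Q hQ
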